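/- arXiv:1610.04995 — 7 statements merged into one kernel-verified Lean document; each statement's English description precedes it below -/
import Mathlib

section
/- Let R be a commutative ring and let a00, a01, a02, a11, a12, a22, b, c be elements of R. Set d := a11*a22 - a12^2, let A be the symmetric 3×3 matrix with rows (a00, a01, a02), (a01, a11, a12), (a02, a12, a22), let B be the symmetric 2×2 matrix with rows (b, c), (c, d), and let N be the symmetric 3×3 matrix with rows (c^2*a00 - b*det A, c*a01, c*a02), (c*a01, a11, a12), (c*a02, a12, a22). Then det N = -(det A)*(det B). -/
/-- Proposition 4.1: determinantal identity `det N = -(det A)(det B)`. -/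
theorem stmt0 {R : Type*} [CommRing R] (a00 a01 a02 a11 a12 a22 b c d : R)
    (hd : d = a11 * a22 - a12 ^ 2)
    (A : Matrix (Fin 3) (Fin 3) R)
    (hA : A = !![a00, a01, a02; a01, a11, a12; a02, a12, a22])
    (B : Matrix (Fin 2) (Fin 2) R)
    (hB : B = !![b, c; c, d])
    (N : Matrix (Fin 3) (Fin 3) R)
    (hN : N = !![c ^ 2 * a00 - b * A.det, c * a01, c * a02;
                 c * a01, a11, a12;
                 c * a02, a12, a22]) :
    N.det = -(A.det * B.det) := by
  subst hd hA hB hN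
  simp [Matrix.det_fin_three, Matrix.det_fin_two]
  ring
end

section
/- Let k be a field and let L1, L2, L3, L4 be homogeneous linear forms in k[x, y, z] such that any two of them are linearly independent and no three of them have a common nonzero zero in k^3. For each pair i < j let P_{ij} ∈ k^3 be a nonzero vector with L_i(P_{ij}) = L_j(P_{ij}) = 0. If q ∈ k[x, y, z] is homogeneous of degree 2 and q(P_{ij}) = 0 for all six pairs i < j, then q = 0. -/
open MvPolynomial Finsupp

section Aux

variable {k : Type*} [Field k]

private lemma Stmt4.deg3 (s : Fin 3 →₀ ℕ) : s.degree = s 0 + s 1 + s 2 := by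
  rw [Finsupp.degree_apply, Finset.sum_subset (Finset.subset_univ s.support)
    (by intro x _ hx; simpa using (fun h => hx (Finsupp.mem_support_iff.2 h)))]
  simp [Fin.sum_univ_three]

private lemma Stmt4.classify1 (s : Fin 3 →₀ ℕ) (h : s 0 + s 1 + s 2 = 1) :
    s = single 0 1 ∨ s = single 1 1 ∨ s = single 2 1 := by
  rcases (by omega : (s 0 = 1 ∧ s 1 = 0 ∧ s 2 = 0) ∨ (s 0 = 0 ∧ s 1 = 1 ∧ s 2 = 0) ∨
      (s 0 = 0 ∧ s 1 = 0 ∧ s 2 = 1)) with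
    ⟨h0, h1, h2⟩ | ⟨h0, h1, h2⟩ | ⟨h0, h1, h2⟩
  · exact Or.inl (by ext i; fin_cases i <;> simp [h0, h1, h2, single_apply])
  · exact Or.inr <| Or.inl (by ext i; fin_cases i <;> simp [h0, h1, h2, single_apply])
  · exact Or.inr <| Or.inr (by ext i; fin_cases i <;> simp [h0, h1, h2, single_apply])

private lemma Stmt4.classify2 (s : Fin 3 →₀ ℕ) (h : s 0 + s 1 + s 2 = 2) :
    s = single 0 2 ∨ s = single 1 2 ∨ s = single 2 2 ∨
    s = single 0 1 + single 1 1 ∨ s = single 0 1 + single 2 1 ∨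
    s = single 1 1 + single 2 1 := by
  rcases (by omega : (s 0 = 2 ∧ s 1 = 0 ∧ s 2 = 0) ∨ (s 0 = 0 ∧ s 1 = 2 ∧ s 2 = 0) ∨
      (s 0 = 0 ∧ s 1 = 0 ∧ s 2 = 2) ∨ (s 0 = 1 ∧ s 1 = 1 ∧ s 2 = 0) ∨
      (s 0 = 1 ∧ s 1 = 0 ∧ s 2 = 1) ∨ (s 0 = 0 ∧ s 1 = 1 ∧ s 2 = 1)) with
    ⟨h0, h1, h2⟩ | ⟨h0, h1, h2⟩ | ⟨h0, h1, h2⟩ | ⟨h0, h1, h2⟩ | ⟨h0, h1, h2⟩ | ⟨h0, h1, h2⟩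
  · exact Or.inl (by ext i; fin_cases i <;> simp [h0, h1, h2, single_apply])
  · exact Or.inr <| Or.inl (by ext i; fin_cases i <;> simp [h0, h1, h2, single_apply])
  · exact Or.inr <| Or.inr <| Or.inl (by ext i; fin_cases i <;> simp [h0, h1, h2, single_apply])
  · exact Or.inr <| Or.inr <| Or.inr <| Or.inl
      (by ext i; fin_cases i <;> simp [h0, h1, h2, single_apply])
  · exact Or.inr <| Or.inr <| Or.inr <| Or.inr <| Or.inl
      (by ext i; fin_cases i <;> simp [h0, h1, h2, single_apply])
  · exact Or.inr <| Or.inr <| Or.inr <| Or.inr <| Or.inr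
      (by ext i; fin_cases i <;> simp [h0, h1, h2, single_apply])

/-- A homogeneous linear polynomial in three variables is a linear combination
of the variables. -/
private lemma Stmt4.deg1_decomp (p : MvPolynomial (Fin 3) k) (hp : p.IsHomogeneous 1) :
    p = ∑ j : Fin 3, C (coeff (single j 1) p) * X j := by
  have hsub : p.support ⊆ {single 0 1, single 1 1, single 2 1} := by
    intro s hs
    have hd : s.degree = 1 := by
      by_contra hne
      exact (Finsupp.mem_support_iff.1 hs) (hp.coeff_eq_zero hne)
    rcases Stmt4.classify1 s (by rw [Stmt4.deg3] at hd; omega) with h | h | h <;> simp [h]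
  conv_lhs => rw [← support_sum_monomial_coeff p]
  rw [Finset.sum_subset hsub
    (by intro s _ hs; rw [MvPolynomial.notMem_support_iff.1 hs, monomial_zero])]
  rw [Fin.sum_univ_three]
  rw [Finset.sum_insert (by simp [Finsupp.single_eq_single_iff]),
    Finset.sum_insert (by simp [Finsupp.single_eq_single_iff]), Finset.sum_singleton]
  simp [C_mul_X_eq_monomial]
  ring

/-- Evaluation of a homogeneous quadratic polynomial in three variables. -/
private lemma Stmt4.eval_deg2 (p : MvPolynomial (Fin 3) k) (hp : p.IsHomogeneous 2)
    (v : Fin 3 → k) :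
    eval v p = coeff (single 0 2) p * v 0 ^ 2 + coeff (single 1 2) p * v 1 ^ 2
      + coeff (single 2 2) p * v 2 ^ 2
      + coeff (single 0 1 + single 1 1) p * (v 0 * v 1)
      + coeff (single 0 1 + single 2 1) p * (v 0 * v 2)
      + coeff (single 1 1 + single 2 1) p * (v 1 * v 2) := by
  rw [eval_eq']
  have hsub : p.support ⊆ {single 0 2, single 1 2, single 2 2,
      single 0 1 + single 1 1, single 0 1 + single 2 1, single 1 1 + single 2 1} := by
    intro s hs
    have hd : s.degree = 2 := by
      by_contra hne
      exact (Finsupp.mem_support_iff.1 hs) (hp.coeff_eq_zero hne)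
    rcases Stmt4.classify2 s (by rw [Stmt4.deg3] at hd; omega) with h|h|h|h|h|h <;> simp [h]
  rw [Finset.sum_subset hsub
    (by intro s _ hs; exact mul_eq_zero.2 (Or.inl (Finsupp.notMem_support_iff.1 hs)))]
  repeat rw [Finset.sum_insert ?_]
  rotate_left
  all_goals try (
    simp only [Finset.mem_insert, Finset.mem_singleton, not_or]
    repeat' constructor
    all_goals
      intro h
      first
        | (have := DFunLike.congr_fun h 0; simp at this; done)
        | (have := DFunLike.congr_fun h 1; simp at this; done)
        | (have := DFunLike.congr_fun h 2; simp at this))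
  rw [Finset.sum_singleton]
  simp [Fin.prod_univ_three, single_apply]
  ring

/-- A homogeneous quadratic polynomial in three variables all of whose six relevant
coefficients vanish is zero. -/
private lemma Stmt4.deg2_zero (p : MvPolynomial (Fin 3) k) (hp : p.IsHomogeneous 2)
    (h1 : coeff (single 0 2) p = 0) (h2 : coeff (single 1 2) p = 0)
    (h3 : coeff (single 2 2) p = 0) (h4 : coeff (single 0 1 + single 1 1) p = 0)
    (h5 : coeff (single 0 1 + single 2 1) p = 0)
    (h6 : coeff (single 1 1 + single 2 1) p = 0) : p = 0 := by
  ext s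
  rw [coeff_zero]
  by_cases hd : s.degree = 2
  · rcases Stmt4.classify2 s (by rw [Stmt4.deg3] at hd; omega) with h|h|h|h|h|h <;>
      simp [h, h1, h2, h3, h4, h5, h6]
  · exact hp.coeff_eq_zero hd

end Aux

/-- No conic passes through the six pairwise intersection points of four general
lines in the plane (from the proof of Lemma 5.11). -/
theorem stmt4 {k : Type*} [Field k]
    (L : Fin 4 → MvPolynomial (Fin 3) k)
    (hhom : ∀ i, (L i).IsHomogeneous 1)
    (hpair : ∀ i j : Fin 4, i ≠ j → LinearIndependent k ![L i, L j])
    (htriple : ∀ i j l : Fin 4, i ≠ j → i ≠ l → j ≠ l →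
      ∀ v : Fin 3 → k, v ≠ 0 →
        ¬ (eval v (L i) = 0 ∧ eval v (L j) = 0 ∧ eval v (L l) = 0))
    (P : Fin 4 → Fin 4 → (Fin 3 → k))
    (hP : ∀ i j : Fin 4, i < j →
      P i j ≠ 0 ∧ eval (P i j) (L i) = 0 ∧ eval (P i j) (L j) = 0)
    (q : MvPolynomial (Fin 3) k) (hq : q.IsHomogeneous 2)
    (hqP : ∀ i j : Fin 4, i < j → eval (P i j) q = 0) :
    q = 0 := by
  classical
  -- the first three lines, as polynomials indexed by `Fin 3`
  set L' : Fin 3 → MvPolynomial (Fin 3) k := fun m => L m.castSucc with hL'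
  have hL'0 : L' 0 = L 0 := rfl
  have hL'1 : L' 1 = L 1 := rfl
  have hL'2 : L' 2 = L 2 := rfl
  -- the coefficient matrix of the first three lines
  set M : Matrix (Fin 3) (Fin 3) k := fun i j => coeff (single j 1) (L' i) with hM
  have hdecomp : ∀ i : Fin 3, L' i = ∑ j : Fin 3, C (M i j) * X j :=
    fun i => Stmt4.deg1_decomp (L' i) (hhom i.castSucc)
  have hevalL : ∀ (i : Fin 3) (v : Fin 3 → k), eval v (L' i) = ∑ j : Fin 3, M i j * v j := by
    intro i v
    conv_lhs => rw [hdecomp i]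
    simp
  -- the matrix is invertible since the first three lines have no common zero
  have hdet : M.det ≠ 0 := by
    intro hdet
    obtain ⟨v, hv, hMv⟩ := (Matrix.exists_mulVec_eq_zero_iff).2 hdet
    refine htriple 0 1 2 (by decide) (by decide) (by decide) v hv ⟨?_, ?_, ?_⟩
    · rw [← hL'0, hevalL]; simpa [Matrix.mulVec, dotProduct] using congrFun hMv 0
    · rw [← hL'1, hevalL]; simpa [Matrix.mulVec, dotProduct] using congrFun hMv 1
    · rw [← hL'2, hevalL]; simpa [Matrix.mulVec, dotProduct] using congrFun hMv 2
  have hNM : M⁻¹ * M = 1 := Matrix.nonsing_inv_mul M (isUnit_iff_ne_zero.2 hdet)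
  set N : Matrix (Fin 3) (Fin 3) k := M⁻¹ with hN
  -- express q as a polynomial in the first three lines
  set r : MvPolynomial (Fin 3) k := bind₁ (fun i : Fin 3 => ∑ j : Fin 3, C (N i j) * X j) q
    with hr
  have hrhom : r.IsHomogeneous 2 := by
    have := hq.aeval (fun i : Fin 3 => ∑ j : Fin 3, C (N i j) * X j) (n := 1) ?_
    · simpa using this
    · intro i
      apply MvPolynomial.IsHomogeneous.sum
      intro j _
      simpa using isHomogeneous_C_mul_X_pow (N i j) j 1
  have hqr : bind₁ L' r = q := by
    rw [hr, bind₁_bind₁]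
    have hId : (fun i : Fin 3 => bind₁ L' (∑ j : Fin 3, C (N i j) * X j)) = X := by
      funext i
      have : bind₁ L' (∑ j : Fin 3, C (N i j) * X j) = ∑ j : Fin 3, C (N i j) * L' j := by
        simp [bind₁_X_right]
      rw [this]
      have : ∑ j : Fin 3, C (N i j) * L' j = ∑ m : Fin 3, C ((N * M) i m) * X m := by
        have step : ∀ j : Fin 3, C (N i j) * L' j = ∑ m : Fin 3, C (N i j) * (C (M j m) * X m) :=
          fun j => by rw [hdecomp j, Finset.mul_sum]
        rw [Finset.sum_congr rfl (fun j _ => step j), Finset.sum_comm]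
        congr 1
        funext m
        rw [Matrix.mul_apply, map_sum, Finset.sum_mul]
        congr 1
        funext j
        rw [map_mul]
        ring
      rw [this, hNM]
      rw [Fin.sum_univ_three]
      fin_cases i <;> simp [Matrix.one_apply]
    rw [hId, bind₁_X_left, AlgHom.id_apply]
  -- evaluation of q at a point equals evaluation of r at the values of the lines
  have hevalq : ∀ v : Fin 3 → k, eval v q = eval (fun i => eval v (L' i)) r := by
    intro v
    conv_lhs => rw [← hqr]
    exact eval₂Hom_bind₁ (RingHom.id k) v L' r
  -- nonvanishing facts from "no three lines concurrent"
  have hnz : ∀ i j l : Fin 4, i ≠ j → i ≠ l → j ≠ l → ∀ p : Fin 3 → k, p ≠ 0 →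
      eval p (L i) = 0 → eval p (L j) = 0 → eval p (L l) ≠ 0 := by
    intro i j l hij hil hjl p hp hi hj hl
    exact htriple i j l hij hil hjl p hp ⟨hi, hj, hl⟩
  -- coefficients of r
  set A := coeff (single 0 2) r
  set B := coeff (single 1 2) r
  set Cc := coeff (single 2 2) r
  set D := coeff (single 0 1 + single 1 1) r
  set E := coeff (single 0 1 + single 2 1) r
  set F := coeff (single 1 1 + single 2 1) r
  have keyeval : ∀ v : Fin 3 → k,
      eval v r = A * v 0 ^ 2 + B * v 1 ^ 2 + Cc * v 2 ^ 2
        + D * (v 0 * v 1) + E * (v 0 * v 2) + F * (v 1 * v 2) :=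
    fun v => Stmt4.eval_deg2 r hrhom v
  -- process the six points
  obtain ⟨hP01, h010, h011⟩ := hP 0 1 (by decide)
  obtain ⟨hP02, h020, h022⟩ := hP 0 2 (by decide)
  obtain ⟨hP12, h121, h122⟩ := hP 1 2 (by decide)
  obtain ⟨hP03, h030, h033⟩ := hP 0 3 (by decide)
  obtain ⟨hP13, h131, h133⟩ := hP 1 3 (by decide)
  obtain ⟨hP23, h232, h233⟩ := hP 2 3 (by decide)
  -- values of the lines at the points
  have e01 := hqr ▸ (hqP 0 1 (by decide))
  -- diagonal coefficients
  have hCc : Cc = 0 := by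
    have h2 : eval (P 0 1) (L 2) ≠ 0 := hnz 0 1 2 (by decide) (by decide) (by decide) _ hP01 h010 h011
    have := (hevalq (P 0 1)) ▸ (hqP 0 1 (by decide))
    rw [keyeval] at this
    simp only [hL'0, hL'1, hL'2, h010, h011] at this
    have : Cc * eval (P 0 1) (L 2) ^ 2 = 0 := by linear_combination this
    exact (mul_eq_zero.1 this).resolve_right (pow_ne_zero 2 h2)
  have hB : B = 0 := by
    have h2 : eval (P 0 2) (L 1) ≠ 0 := hnz 0 2 1 (by decide) (by decide) (by decide) _ hP02 h020 h022
    have := (hevalq (P 0 2)) ▸ (hqP 0 2 (by decide))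
    rw [keyeval] at this
    simp only [hL'0, hL'1, hL'2, h020, h022] at this
    have : B * eval (P 0 2) (L 1) ^ 2 = 0 := by linear_combination this
    exact (mul_eq_zero.1 this).resolve_right (pow_ne_zero 2 h2)
  have hA : A = 0 := by
    have h2 : eval (P 1 2) (L 0) ≠ 0 := hnz 1 2 0 (by decide) (by decide) (by decide) _ hP12 h121 h122
    have := (hevalq (P 1 2)) ▸ (hqP 1 2 (by decide))
    rw [keyeval] at this
    simp only [hL'0, hL'1, hL'2, h121, h122] at this
    have : A * eval (P 1 2) (L 0) ^ 2 = 0 := by linear_combination this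
    exact (mul_eq_zero.1 this).resolve_right (pow_ne_zero 2 h2)
  -- off-diagonal coefficients
  have hF : F = 0 := by
    have h1 : eval (P 0 3) (L 1) ≠ 0 := hnz 0 3 1 (by decide) (by decide) (by decide) _ hP03 h030 h033
    have h2 : eval (P 0 3) (L 2) ≠ 0 := hnz 0 3 2 (by decide) (by decide) (by decide) _ hP03 h030 h033
    have := (hevalq (P 0 3)) ▸ (hqP 0 3 (by decide))
    rw [keyeval] at this
    simp only [hL'0, hL'1, hL'2, h030, hA, hB, hCc] at this
    have : F * (eval (P 0 3) (L 1) * eval (P 0 3) (L 2)) = 0 := by linear_combination this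
    exact (mul_eq_zero.1 this).resolve_right (mul_ne_zero h1 h2)
  have hE : E = 0 := by
    have h1 : eval (P 1 3) (L 0) ≠ 0 := hnz 1 3 0 (by decide) (by decide) (by decide) _ hP13 h131 h133
    have h2 : eval (P 1 3) (L 2) ≠ 0 := hnz 1 3 2 (by decide) (by decide) (by decide) _ hP13 h131 h133
    have := (hevalq (P 1 3)) ▸ (hqP 1 3 (by decide))
    rw [keyeval] at this
    simp only [hL'0, hL'1, hL'2, h131, hA, hB, hCc] at this
    have : E * (eval (P 1 3) (L 0) * eval (P 1 3) (L 2)) = 0 := by linear_combination this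
    exact (mul_eq_zero.1 this).resolve_right (mul_ne_zero h1 h2)
  have hD : D = 0 := by
    have h1 : eval (P 2 3) (L 0) ≠ 0 := hnz 2 3 0 (by decide) (by decide) (by decide) _ hP23 h232 h233
    have h2 : eval (P 2 3) (L 1) ≠ 0 := hnz 2 3 1 (by decide) (by decide) (by decide) _ hP23 h232 h233
    have := (hevalq (P 2 3)) ▸ (hqP 2 3 (by decide))
    rw [keyeval] at this
    simp only [hL'0, hL'1, hL'2, h232, hA, hB, hCc] at this
    have : D * (eval (P 2 3) (L 0) * eval (P 2 3) (L 1)) = 0 := by linear_combination this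
    exact (mul_eq_zero.1 this).resolve_right (mul_ne_zero h1 h2)
  have hr0 : r = 0 := Stmt4.deg2_zero r hrhom hA hB hCc hD hE hF
  rw [← hqr, hr0, map_zero]
end

section
/- Let k be a field and let L1, L2, L3, L4 be homogeneous linear forms in k[x, y, z] such that any two of them are linearly independent and no three of them have a common nonzero zero in k^3. For each pair i < j let P_{ij} ∈ k^3 be a nonzero vector with L_i(P_{ij}) = L_j(P_{ij}) = 0. Then the evaluation map sending a homogeneous cubic q ∈ k[x, y, z] of degree 3 to the tuple (q(P_{ij}))_{i<j} ∈ k^6 is surjective: for every assignment of values c_{ij} ∈ k there exists a homogeneous cubic q with q(P_{ij}) = c_{ij} for all six pairs. -/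
open MvPolynomial

/-- The smaller element of the complement of `{i, j}` in `Fin 4`. -/
private def oth1 (i j : Fin 4) : Fin 4 :=
  if 0 ≠ i ∧ 0 ≠ j then 0 else if 1 ≠ i ∧ 1 ≠ j then 1 else 2

/-- The larger element of the complement of `{i, j}` in `Fin 4`. -/
private def oth2 (i j : Fin 4) : Fin 4 :=
  if 3 ≠ i ∧ 3 ≠ j then 3 else if 2 ≠ i ∧ 2 ≠ j then 2 else 1

/-- Lemma 5.11 (lGenericityCondition, case d = 6): cubics surject onto tuples of
values at the six pairwise intersection points of four general lines. -/
theorem stmt5 {k : Type*} [Field k]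
    (L : Fin 4 → MvPolynomial (Fin 3) k)
    (hhom : ∀ i, (L i).IsHomogeneous 1)
    (hpair : ∀ i j : Fin 4, i ≠ j → LinearIndependent k ![L i, L j])
    (htriple : ∀ i j l : Fin 4, i ≠ j → i ≠ l → j ≠ l →
      ∀ v : Fin 3 → k, v ≠ 0 →
        ¬ (eval v (L i) = 0 ∧ eval v (L j) = 0 ∧ eval v (L l) = 0))
    (P : Fin 4 → Fin 4 → (Fin 3 → k))
    (hP : ∀ i j : Fin 4, i < j →
      P i j ≠ 0 ∧ eval (P i j) (L i) = 0 ∧ eval (P i j) (L j) = 0)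
    (c : Fin 4 → Fin 4 → k) :
    ∃ q : MvPolynomial (Fin 3) k, q.IsHomogeneous 3 ∧
      ∀ i j : Fin 4, i < j → eval (P i j) q = c i j := by
  classical
  have hcomb : ∀ i j : Fin 4, i < j →
      oth1 i j ≠ i ∧ oth1 i j ≠ j ∧ oth2 i j ≠ i ∧ oth2 i j ≠ j := by decide
  have hcover : ∀ a b i j : Fin 4, a < b → i < j → ¬(a = i ∧ b = j) →
      oth1 a b = i ∨ oth1 a b = j ∨ oth2 a b = i ∨ oth2 a b = j := by decide
  have hnz : ∀ i j : Fin 4, i < j → ∀ l : Fin 4, l ≠ i → l ≠ j →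
      eval (P i j) (L l) ≠ 0 := by
    intro i j hij l hli hlj h0
    obtain ⟨hne, h1, h2⟩ := hP i j hij
    exact htriple i j l hij.ne (Ne.symm hli) (Ne.symm hlj) (P i j) hne ⟨h1, h2, h0⟩
  set F : Fin 4 → Fin 4 → MvPolynomial (Fin 3) k :=
    fun i j => (L (oth1 i j)) ^ 2 * L (oth2 i j) with hF
  refine ⟨∑ p ∈ Finset.univ.filter (fun p : Fin 4 × Fin 4 => p.1 < p.2),
      C (c p.1 p.2 / eval (P p.1 p.2) (F p.1 p.2)) * F p.1 p.2, ?_, ?_⟩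
  · apply IsHomogeneous.sum
    intro p _
    have h0 : (C (c p.1 p.2 / eval (P p.1 p.2) (F p.1 p.2)) :
        MvPolynomial (Fin 3) k).IsHomogeneous 0 := isHomogeneous_C _ _
    have h3 : (F p.1 p.2).IsHomogeneous 3 := by
      have hp2 : ((L (oth1 p.1 p.2)) ^ 2).IsHomogeneous 2 := by
        simpa using (hhom (oth1 p.1 p.2)).pow 2
      simpa using hp2.mul (hhom (oth2 p.1 p.2))
    simpa using h0.mul h3
  · intro i j hij
    rw [map_sum, Finset.sum_eq_single (i, j)]
    · have hden : eval (P i j) (F i j) ≠ 0 := by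
        have h1 := hnz i j hij (oth1 i j) (hcomb i j hij).1 (hcomb i j hij).2.1
        have h2 := hnz i j hij (oth2 i j) (hcomb i j hij).2.2.1 (hcomb i j hij).2.2.2
        simp only [hF, map_mul, map_pow]
        exact mul_ne_zero (pow_ne_zero _ h1) h2
      simp only [map_mul, eval_C]
      field_simp
    · intro p hp hne
      have hab : p.1 < p.2 := (Finset.mem_filter.mp hp).2
      have hne' : ¬(p.1 = i ∧ p.2 = j) := fun ⟨h1, h2⟩ => hne (Prod.ext h1 h2)
      obtain ⟨_, hi0, hj0⟩ := hP i j hij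
      rcases hcover p.1 p.2 i j hab hij hne' with h | h | h | h <;>
        simp [hF, map_mul, map_pow, h, hi0, hj0]
    · intro h
      exact absurd (Finset.mem_filter.mpr ⟨Finset.mem_univ ((i, j) : Fin 4 × Fin 4), hij⟩) h
end

section
/- In the polynomial ring ℤ[S, T, U, V], the determinant of the symmetric 3×3 matrix with rows (V^2, U^2 - V^2, T^2 - V^2), (U^2 - V^2, V^2, S^2 - V^2), (T^2 - V^2, S^2 - V^2, V^2) equals 2*S^2*T^2*U^2 - (2*V^3 - V*(S^2 + T^2 + U^2))^2. Consequently, in any commutative ring R containing an element w with w^2 = 2, this determinant factors as -(2*V^3 - V*(S^2 + T^2 + U^2) + w*S*T*U) * (2*V^3 - V*(S^2 + T^2 + U^2) - w*S*T*U). -/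
open MvPolynomial

/-- Example 3.5: the discriminant of the Hassett–Pirutka–Tschinkel conic bundle.
Here `X 0 = S`, `X 1 = T`, `X 2 = U`, `X 3 = V`. -/
theorem stmt6 :
    (!![(X 3 : MvPolynomial (Fin 4) ℤ) ^ 2, X 2 ^ 2 - X 3 ^ 2, X 1 ^ 2 - X 3 ^ 2;
        X 2 ^ 2 - X 3 ^ 2, X 3 ^ 2, X 0 ^ 2 - X 3 ^ 2;
        X 1 ^ 2 - X 3 ^ 2, X 0 ^ 2 - X 3 ^ 2, X 3 ^ 2]).det
      = 2 * X 0 ^ 2 * X 1 ^ 2 * X 2 ^ 2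
        - (2 * X 3 ^ 3 - X 3 * (X 0 ^ 2 + X 1 ^ 2 + X 2 ^ 2)) ^ 2 ∧
    ∀ (R : Type) [CommRing R], ∀ w : R, w ^ 2 = 2 →
      (!![(X 3 : MvPolynomial (Fin 4) R) ^ 2, X 2 ^ 2 - X 3 ^ 2, X 1 ^ 2 - X 3 ^ 2;
          X 2 ^ 2 - X 3 ^ 2, X 3 ^ 2, X 0 ^ 2 - X 3 ^ 2;
          X 1 ^ 2 - X 3 ^ 2, X 0 ^ 2 - X 3 ^ 2, X 3 ^ 2]).det
        = -((2 * X 3 ^ 3 - X 3 * (X 0 ^ 2 + X 1 ^ 2 + X 2 ^ 2) + C w * X 0 * X 1 * X 2) *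
            (2 * X 3 ^ 3 - X 3 * (X 0 ^ 2 + X 1 ^ 2 + X 2 ^ 2) - C w * X 0 * X 1 * X 2)) := by
  constructor
  · simp only [Matrix.det_fin_three, Matrix.cons_val', Matrix.cons_val_zero, Matrix.cons_val_one,
      Matrix.head_cons, Matrix.empty_val', Matrix.cons_val_fin_one, Matrix.head_fin_const,
      Matrix.of_apply, Matrix.cons_val_two, Matrix.tail_cons]
    ring
  · intro R _ w hw
    have h2 : (C w : MvPolynomial (Fin 4) R) ^ 2 = 2 := by
      rw [← C_pow, hw]; exact map_ofNat _ 2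
    simp only [Matrix.det_fin_three, Matrix.cons_val', Matrix.cons_val_zero, Matrix.cons_val_one,
      Matrix.head_cons, Matrix.empty_val', Matrix.cons_val_fin_one, Matrix.head_fin_const,
      Matrix.of_apply, Matrix.cons_val_two, Matrix.tail_cons]
    linear_combination -(X 0 * X 1 * X 2 : MvPolynomial (Fin 4) R)^2 * h2
end

section
/- Let k be a field of characteristic different from 2 and different from 3, and let F = X0^3 + 2*X1*X2*X3 - X0*(X1^2 + X2^2 + X3^2) in k[X0, X1, X2, X3]. Then a point x = (x0, x1, x2, x3) ∈ k^4 annihilates all four partial derivatives of F (i.e., ∂F/∂Xi(x) = 0 for i = 0, 1, 2, 3) if and only if x is a scalar multiple of one of the four vectors (1,1,1,1), (1,-1,-1,1), (1,1,-1,-1), (1,-1,1,-1). -/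
open MvPolynomial

/-- The singular locus of the Cayley cubic consists exactly of the four nodes
(1:1:1:1), (1:-1:-1:1), (1:1:-1:-1), (1:-1:1:-1) (Sections 3 and 5). -/
theorem stmt7 {k : Type*} [Field k] (h2 : (2 : k) ≠ 0) (h3 : (3 : k) ≠ 0)
    (F : MvPolynomial (Fin 4) k)
    (hF : F = X 0 ^ 3 + 2 * X 1 * X 2 * X 3 - X 0 * (X 1 ^ 2 + X 2 ^ 2 + X 3 ^ 2))
    (x : Fin 4 → k) :
    (∀ i : Fin 4, eval x (pderiv i F) = 0) ↔
      ∃ c : k,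
        x = c • ![1, 1, 1, 1] ∨ x = c • ![1, -1, -1, 1] ∨
        x = c • ![1, 1, -1, -1] ∨ x = c • ![1, -1, 1, -1] := by
  subst hF
  have hc2 : (2 : MvPolynomial (Fin 4) k) = C 2 :=
    (map_ofNat (C : k →+* MvPolynomial (Fin 4) k) 2).symm
  have key : ∀ y : Fin 4 → k,
      (∀ i : Fin 4, eval y (pderiv i ((X 0 ^ 3 + 2 * X 1 * X 2 * X 3 -
          X 0 * (X 1 ^ 2 + X 2 ^ 2 + X 3 ^ 2)) : MvPolynomial (Fin 4) k)) = 0) ↔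
        (3 * y 0 ^ 2 - (y 1 ^ 2 + y 2 ^ 2 + y 3 ^ 2) = 0 ∧
         y 3 * (y 2 * 2) - y 0 * (2 * y 1) = 0 ∧
         y 3 * (2 * y 1) - y 0 * (2 * y 2) = 0 ∧
         2 * y 1 * y 2 - y 0 * (2 * y 3) = 0) := by
    intro y
    constructor
    · intro h
      have e0 := h 0; have e1 := h 1; have e2 := h 2; have e3 := h 3
      simp (config := { decide := true }) [pderiv_X, Pi.single_apply, Fin.ext_iff, hc2,
        pderiv_C] at e0 e1 e2 e3
      exact ⟨e0, e1, e2, e3⟩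
    · rintro ⟨e0, e1, e2, e3⟩ i
      fin_cases i <;>
        simp (config := { decide := true }) [pderiv_X, Pi.single_apply, Fin.ext_iff, hc2,
          pderiv_C] <;> assumption
  rw [key x]
  constructor
  · rintro ⟨e0, e1, e2, e3⟩
    have cancel2 : ∀ a : k, 2 * a = 0 → a = 0 := fun a ha =>
      (mul_eq_zero.1 ha).resolve_left h2
    have f1 : x 3 * x 2 - x 0 * x 1 = 0 := cancel2 _ (by linear_combination e1)
    have f2 : x 3 * x 1 - x 0 * x 2 = 0 := cancel2 _ (by linear_combination e2)
    have f3 : x 1 * x 2 - x 0 * x 3 = 0 := cancel2 _ (by linear_combination e3)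
    by_cases h0 : x 0 = 0
    · have hsum : x 1 ^ 2 + x 2 ^ 2 + x 3 ^ 2 = 0 := by
        linear_combination -e0 + 3 * x 0 * h0
      have hz : x 1 = 0 ∧ x 2 = 0 ∧ x 3 = 0 := by
        rcases mul_eq_zero.1 (by linear_combination f3 + x 3 * h0 : x 1 * x 2 = 0) with h1 | h1
        · rcases mul_eq_zero.1 (by linear_combination f1 + x 1 * h0 : x 3 * x 2 = 0) with h4 | h4
          · exact ⟨h1, pow_eq_zero_iff (n := 2) two_ne_zero |>.1
              (by linear_combination hsum - x 1 * h1 - x 3 * h4 : x 2 ^ 2 = 0), h4⟩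
          · exact ⟨h1, h4, pow_eq_zero_iff (n := 2) two_ne_zero |>.1
              (by linear_combination hsum - x 1 * h1 - x 2 * h4 : x 3 ^ 2 = 0)⟩
        · rcases mul_eq_zero.1 (by linear_combination f2 + x 2 * h0 : x 3 * x 1 = 0) with h4 | h4
          · exact ⟨pow_eq_zero_iff (n := 2) two_ne_zero |>.1
              (by linear_combination hsum - x 2 * h1 - x 3 * h4 : x 1 ^ 2 = 0), h1, h4⟩
          · exact ⟨h4, h1, pow_eq_zero_iff (n := 2) two_ne_zero |>.1
              (by linear_combination hsum - x 2 * h1 - x 1 * h4 : x 3 ^ 2 = 0)⟩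
      refine ⟨0, Or.inl ?_⟩
      funext i; fin_cases i <;> simp [h0, hz.1, hz.2.1, hz.2.2]
    · have hx3 : x 3 ≠ 0 := by
        intro h4
        have h1 : x 1 = 0 :=
          (mul_eq_zero.1 (by linear_combination x 2 * h4 - f1 : x 0 * x 1 = 0)).resolve_left h0
        have hx2 : x 2 = 0 :=
          (mul_eq_zero.1 (by linear_combination x 1 * h4 - f2 : x 0 * x 2 = 0)).resolve_left h0
        have : 3 * x 0 ^ 2 = 0 := by
          linear_combination e0 + x 1 * h1 + x 2 * hx2 + x 3 * h4
        rcases mul_eq_zero.1 this with h' | h'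
        · exact h3 h'
        · exact h0 (pow_eq_zero_iff (n := 2) two_ne_zero |>.1 h')
      have hsq1 : (x 1 - x 0) * (x 1 + x 0) = 0 := by
        have h' : (x 1 ^ 2 - x 0 ^ 2) * x 3 = 0 := by
          linear_combination x 1 * f2 + x 0 * f3
        linear_combination (mul_eq_zero.1 h').resolve_right hx3
      have hsq2 : (x 2 - x 0) * (x 2 + x 0) = 0 := by
        have h' : (x 2 ^ 2 - x 0 ^ 2) * x 3 = 0 := by
          linear_combination x 2 * f1 + x 0 * f3
        linear_combination (mul_eq_zero.1 h').resolve_right hx3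
      have hx3eq : ∀ s : k, x 1 = s * x 0 → ∀ t : k, x 2 = t * x 0 →
          x 3 = s * t * x 0 := by
        intro s hs t ht
        have h' : x 0 * (x 3 - s * t * x 0) = 0 := by
          linear_combination -f3 + x 2 * hs + s * x 0 * ht
        linear_combination (mul_eq_zero.1 h').resolve_left h0
      refine ⟨x 0, ?_⟩
      rcases mul_eq_zero.1 hsq1 with h1 | h1 <;>
        rcases mul_eq_zero.1 hsq2 with hb | hb
      · refine Or.inl ?_
        have hx1 : x 1 = x 0 := by linear_combination h1
        have hx2 : x 2 = x 0 := by linear_combination hb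
        have hx3e := hx3eq 1 (by linear_combination h1) 1 (by linear_combination hb)
        funext i; fin_cases i <;> simp [hx1, hx2] <;> linear_combination hx3e
      · refine Or.inr (Or.inr (Or.inl ?_))
        have hx1 : x 1 = x 0 := by linear_combination h1
        have hx2 : x 2 = -x 0 := by linear_combination hb
        have hx3e := hx3eq 1 (by linear_combination h1) (-1) (by linear_combination hb)
        funext i; fin_cases i <;> simp [hx1, hx2] <;> linear_combination hx3e
      · refine Or.inr (Or.inr (Or.inr ?_))
        have hx1 : x 1 = -x 0 := by linear_combination h1
        have hx2 : x 2 = x 0 := by linear_combination hb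
        have hx3e := hx3eq (-1) (by linear_combination h1) 1 (by linear_combination hb)
        funext i; fin_cases i <;> simp [hx1, hx2] <;> linear_combination hx3e
      · refine Or.inr (Or.inl ?_)
        have hx1 : x 1 = -x 0 := by linear_combination h1
        have hx2 : x 2 = -x 0 := by linear_combination hb
        have hx3e := hx3eq (-1) (by linear_combination h1) (-1) (by linear_combination hb)
        funext i; fin_cases i <;> simp [hx1, hx2] <;> linear_combination hx3e
  · rintro ⟨c, h | h | h | h⟩ <;> subst h <;>
      refine ⟨?_, ?_, ?_, ?_⟩ <;> simp <;> ring
end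

section
/- Let k be a field and let a, b, c be polynomials in k[s, t, u] (three variables) each having zero constant term. Let f = a*c - b^2 and let J be the ideal of k[s, t, u] generated by the three partial derivatives ∂f/∂s, ∂f/∂t, ∂f/∂u. If J equals the ideal (s, t, u), then the ideal generated by a, b, c equals the ideal (s, t, u). -/
open MvPolynomial

lemma mem_span_X_of_constantCoeff_eq_zero {k : Type*} [CommRing k]
    (p : MvPolynomial (Fin 3) k) (hp : constantCoeff p = 0) :
    p ∈ Ideal.span {(X 0 : MvPolynomial (Fin 3) k), X 1, X 2} := by
  have himg : (X '' (Set.univ : Set (Fin 3)) : Set (MvPolynomial (Fin 3) k)) =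
      {X 0, X 1, X 2} := by
    ext q
    simp only [Set.image_univ, Set.mem_range, Set.mem_insert_iff, Set.mem_singleton_iff]
    constructor
    · rintro ⟨i, rfl⟩; fin_cases i <;> simp
    · rintro (rfl | rfl | rfl) <;> exact ⟨_, rfl⟩
  rw [← himg, mem_ideal_span_X_image]
  intro m hm
  by_contra h
  push_neg at h
  have : m = 0 := by
    ext i
    have := h i (Set.mem_univ i)
    simpa using this
  subst this
  rw [mem_support_iff] at hm
  exact hm (by simpa [← constantCoeff_eq] using hp)

/-- Algebraic content of Lemma 6.7 (lNode): if `a, b, c` vanish at the origin and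
the Jacobian ideal of `f = a*c - b²` is the maximal ideal `(s, t, u)`, then
`(a, b, c) = (s, t, u)`. -/
theorem stmt12 {k : Type*} [Field k]
    (a b c : MvPolynomial (Fin 3) k)
    (ha : constantCoeff a = 0) (hb : constantCoeff b = 0) (hc : constantCoeff c = 0)
    (f : MvPolynomial (Fin 3) k) (hf : f = a * c - b ^ 2)
    (hJ : Ideal.span {pderiv 0 f, pderiv 1 f, pderiv 2 f} =
          Ideal.span {(X 0 : MvPolynomial (Fin 3) k), X 1, X 2}) :
    Ideal.span {a, b, c} = Ideal.span {(X 0 : MvPolynomial (Fin 3) k), X 1, X 2} := by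
  apply le_antisymm
  · rw [Ideal.span_le]
    rintro p hp
    rcases hp with h | h | h <;> rw [h]
    · exact mem_span_X_of_constantCoeff_eq_zero a ha
    · exact mem_span_X_of_constantCoeff_eq_zero b hb
    · exact mem_span_X_of_constantCoeff_eq_zero c hc
  · rw [← hJ, Ideal.span_le]
    have key : ∀ i : Fin 3, pderiv i f ∈ Ideal.span {a, b, c} := by
      intro i
      have hmem : ∀ p ∈ ({a, b, c} : Set (MvPolynomial (Fin 3) k)),
          p ∈ Ideal.span {a, b, c} := fun p hp => Ideal.subset_span hp
      have haS := hmem a (by simp)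
      have hbS := hmem b (by simp)
      have hcS := hmem c (by simp)
      have : pderiv i f = (pderiv i a) * c + a * (pderiv i c)
          - ((pderiv i b) * b + b * (pderiv i b)) := by
        rw [hf]; simp [pderiv_mul, pow_two, pderiv_mul]; ring
      rw [this]
      refine sub_mem (add_mem ?_ ?_) (add_mem ?_ ?_)
      · exact Ideal.mul_mem_left _ _ hcS
      · exact Ideal.mul_mem_right _ _ haS
      · exact Ideal.mul_mem_left _ _ hbS
      · exact Ideal.mul_mem_right _ _ hbS
    rintro p (rfl | rfl | rfl)
    exacts [key 0, key 1, key 2]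
end

section
/- Let k be a field of characteristic different from 2 containing an element w with w^2 = 2. For (s, t, u, v) ∈ k^4 define D± = 2*v^3 - v*(s^2 + t^2 + u^2) ± w*s*t*u. Then D+ = 0 and D- = 0 hold simultaneously if and only if at least one of the following six conditions holds: (u = 0 and v = 0), (t = 0 and v = 0), (s = 0 and v = 0), (u = 0 and s^2 + t^2 = 2*v^2), (t = 0 and s^2 + u^2 = 2*v^2), (s = 0 and t^2 + u^2 = 2*v^2). -/
/-- The intersection of the two discriminant components `D±` of the
Hassett–Pirutka–Tschinkel conic bundle is the arrangement of three lines and three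
conics of Example 3.5 (fIntersectionsUpstairs). -/
theorem stmt16 {k : Type*} [Field k] (hchar : (2 : k) ≠ 0)
    (w : k) (hw : w ^ 2 = 2) (s t u v : k) :
    (2 * v ^ 3 - v * (s ^ 2 + t ^ 2 + u ^ 2) + w * s * t * u = 0 ∧
     2 * v ^ 3 - v * (s ^ 2 + t ^ 2 + u ^ 2) - w * s * t * u = 0) ↔
    ((u = 0 ∧ v = 0) ∨ (t = 0 ∧ v = 0) ∨ (s = 0 ∧ v = 0) ∨
     (u = 0 ∧ s ^ 2 + t ^ 2 = 2 * v ^ 2) ∨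
     (t = 0 ∧ s ^ 2 + u ^ 2 = 2 * v ^ 2) ∨
     (s = 0 ∧ t ^ 2 + u ^ 2 = 2 * v ^ 2)) := by
  have hw0 : w ≠ 0 := by
    intro h; rw [h] at hw; simp at hw; exact hchar hw.symm
  constructor
  · rintro ⟨h1, h2⟩
    have hstu : s * t * u = 0 := by
      have : 2 * (w * (s * t * u)) = 0 := by ring_nf; linear_combination h1 - h2
      rcases mul_eq_zero.mp this with h | h
      · exact absurd h hchar
      · rcases mul_eq_zero.mp h with h | h
        · exact absurd h hw0
        · exact h
    have hv : v * (2 * v ^ 2 - (s ^ 2 + t ^ 2 + u ^ 2)) = 0 := by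
      have : 2 * (v * (2 * v ^ 2 - (s ^ 2 + t ^ 2 + u ^ 2))) = 0 := by
        linear_combination h1 + h2
      rcases mul_eq_zero.mp this with h | h
      · exact absurd h hchar
      · exact h
    rcases mul_eq_zero.mp hstu with hst | hu
    · rcases mul_eq_zero.mp hst with hs | ht
      · subst hs
        rcases mul_eq_zero.mp hv with h | h
        · exact Or.inr (Or.inr (Or.inl ⟨rfl, h⟩))
        · refine Or.inr (Or.inr (Or.inr (Or.inr (Or.inr ⟨rfl, ?_⟩))))
          linear_combination -h
      · subst ht
        rcases mul_eq_zero.mp hv with h | h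
        · exact Or.inr (Or.inl ⟨rfl, h⟩)
        · refine Or.inr (Or.inr (Or.inr (Or.inr (Or.inl ⟨rfl, ?_⟩))))
          linear_combination -h
    · subst hu
      rcases mul_eq_zero.mp hv with h | h
      · exact Or.inl ⟨rfl, h⟩
      · refine Or.inr (Or.inr (Or.inr (Or.inl ⟨rfl, ?_⟩)))
        linear_combination -h
  · rintro (⟨h1, h2⟩ | ⟨h1, h2⟩ | ⟨h1, h2⟩ | ⟨h1, h2⟩ | ⟨h1, h2⟩ | ⟨h1, h2⟩) <;>
      subst h1 <;>
      first
        | (subst h2; constructor <;> ring)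
        | (constructor <;> linear_combination -v * h2)
end
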